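/- arXiv:1810.07117 — 2 statements merged into one kernel-verified Lean document; each statement's English description precedes it below -/
import Mathlib

section
/- Let δ(α) be the number of indices j ∈ {0,...,m} with a_j = (1,1), and let Γ be the set of α = (a₀,...,a_m) ∈ (ℤ₂²)^{m+1} such that δ(α) + [a₀ ∈ {(0,1),(1,0)}] is odd. Then for every α ∈ Γ, the matrix S_α = S_{a₀} ⊗ ··· ⊗ S_{a_m} satisfies S_αᵀ J + J S_α = 0 where J = -y ⊗ I^{⊗m}, i.e., S_α lies in the symplectic Lie algebra sp(2·2^m). -/
open Matrix

/-- The real 2×2 Pauli-type matrices indexed by `ZMod 2 × ZMod 2`: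
`S_{(0,0)} = I`, `S_{(1,0)} = x`, `S_{(1,1)} = y`, `S_{(0,1)} = z`. -/
noncomputable def S2 : ZMod 2 × ZMod 2 → Matrix (Fin 2) (Fin 2) ℝ := fun a =>
  if a = (0, 0) then 1
  else if a = (1, 0) then !![0, 1; 1, 0]
  else if a = (1, 1) then !![0, -1; 1, 0]
  else !![1, 0; 0, -1]

/-- The `(m+1)`-fold Kronecker product `S_α = S_{a₀} ⊗ ⋯ ⊗ S_{a_m}`, realized as a
matrix indexed by functions `Fin (m+1) → Fin 2`. -/
noncomputable def Sfun (m : ℕ) (α : Fin (m + 1) → ZMod 2 × ZMod 2) :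
    Matrix (Fin (m + 1) → Fin 2) (Fin (m + 1) → Fin 2) ℝ :=
  Matrix.of fun v w => ∏ j, S2 (α j) (v j) (w j)

/-- The symplectic inner product on `ZMod 2 × ZMod 2`. -/
def sp2 (a b : ZMod 2 × ZMod 2) : ZMod 2 := a.1 * b.2 + a.2 * b.1

/-- The symplectic form `J = -(y ⊗ I^{⊗m})`. -/
noncomputable def Jmat (m : ℕ) :
    Matrix (Fin (m + 1) → Fin 2) (Fin (m + 1) → Fin 2) ℝ :=
  -(Sfun m fun j => if j = 0 then ((1 : ZMod 2), (1 : ZMod 2)) else (0, 0))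

/-- The number of components of `α` equal to `(1,1)`. -/
def deltaCount (m : ℕ) (α : Fin (m + 1) → ZMod 2 × ZMod 2) : ℕ :=
  (Finset.univ.filter fun j => α j = ((1 : ZMod 2), (1 : ZMod 2))).card

/-- The index set `Γ` of the basis of `sp(2·2^m)`. -/
def GammaSet (m : ℕ) : Finset (Fin (m + 1) → ZMod 2 × ZMod 2) :=
  Finset.univ.filter fun α =>
    Odd (deltaCount m α + if α 0 = (0, 1) ∨ α 0 = (1, 0) then 1 else 0)


-- Auxiliary lemmas

lemma kron_mul (m : ℕ) (A B : Fin (m + 1) → Matrix (Fin 2) (Fin 2) ℝ) :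
    (Matrix.of fun v w => ∏ j, A j (v j) (w j)) *
      (Matrix.of fun v w : Fin (m + 1) → Fin 2 => ∏ j, B j (v j) (w j)) =
    Matrix.of fun v w => ∏ j, (A j * B j) (v j) (w j) := by
  ext v w
  simp only [Matrix.mul_apply, Matrix.of_apply]
  rw [Fintype.prod_sum (fun j k => A j (v j) k * B j k (w j))]
  exact Finset.sum_congr rfl fun u _ => Finset.prod_mul_distrib.symm

lemma zmod2_cases (a : ZMod 2 × ZMod 2) :
    a = (0,0) ∨ a = (1,0) ∨ a = (0,1) ∨ a = (1,1) := by revert a; decide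

lemma S2_00 : S2 (0,0) = 1 := by
  simp [S2]
lemma S2_10 : S2 (1,0) = !![0,1;1,0] := by
  simp [S2]
lemma S2_11 : S2 (1,1) = !![0,-1;1,0] := by
  simp (config := { decide := true }) [S2]
lemma S2_01 : S2 (0,1) = !![1,0;0,-1] := by
  simp [S2]

lemma tr2 (a b c d : ℝ) : !![a,b;c,d]ᵀ = !![a,c;b,d] := by
  ext i j; fin_cases i <;> fin_cases j <;> simp

lemma key0 (a : ZMod 2 × ZMod 2) :
    (S2 a)ᵀ * S2 (1,1) = (if a = (0,0) then (1:ℝ) else -1) • (S2 (1,1) * S2 a) := by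
  rcases zmod2_cases a with h | h | h | h <;> subst h <;>
    simp only [S2_00, S2_10, S2_01, S2_11, Matrix.transpose_one, tr2] <;>
    norm_num <;>
    ext i j <;> fin_cases i <;> fin_cases j <;>
    simp [Matrix.mul_apply, Fin.sum_univ_two, Matrix.one_apply] <;> ring

lemma key1 (a : ZMod 2 × ZMod 2) :
    (S2 a)ᵀ * S2 (0,0) = (if a = (1,1) then (-1:ℝ) else 1) • (S2 (0,0) * S2 a) := by
  rcases zmod2_cases a with h | h | h | h <;> subst h <;>
    simp only [S2_00, S2_10, S2_01, S2_11, Matrix.transpose_one, tr2] <;>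
    norm_num <;>
    ext i j <;> fin_cases i <;> fin_cases j <;>
    simp [Matrix.mul_apply, Fin.sum_univ_two, Matrix.one_apply] <;> ring

/-- For `α ∈ Γ`, the matrix `S_α` lies in the symplectic Lie algebra:
`S_αᵀ J + J S_α = 0`. -/
theorem stmt4 (m : ℕ) (α : Fin (m + 1) → ZMod 2 × ZMod 2)
    (hα : Odd (deltaCount m α + if α 0 = (0, 1) ∨ α 0 = (1, 0) then 1 else 0)) :
    (Sfun m α)ᵀ * Jmat m + Jmat m * Sfun m α = 0 := by
  set β : Fin (m + 1) → ZMod 2 × ZMod 2 :=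
    fun j => if j = 0 then ((1 : ZMod 2), (1 : ZMod 2)) else (0, 0) with hβ
  have hT : (Sfun m α)ᵀ =
      Matrix.of fun v w => ∏ j, (S2 (α j))ᵀ (v j) (w j) := by
    ext v w; simp [Sfun, Matrix.transpose_apply]
  have h1 : (Sfun m α)ᵀ * Sfun m β =
      Matrix.of fun v w => ∏ j, ((S2 (α j))ᵀ * S2 (β j)) (v j) (w j) := by
    rw [hT, Sfun, kron_mul]
  have h2 : Sfun m β * Sfun m α =
      Matrix.of fun v w => ∏ j, (S2 (β j) * S2 (α j)) (v j) (w j) := by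
    rw [Sfun, Sfun, kron_mul]
  set c : Fin (m+1) → ℝ := fun j =>
    (if α j = (1,1) then (-1:ℝ) else 1) *
      (if j = 0 ∧ (α 0 = (0, 1) ∨ α 0 = (1, 0)) then (-1:ℝ) else 1) with hc
  have hfac : ∀ j, (S2 (α j))ᵀ * S2 (β j) = c j • (S2 (β j) * S2 (α j)) := by
    intro j
    simp only [hc, hβ]
    by_cases hj : j = 0
    · subst hj
      simp only [if_pos rfl, true_and, if_true]
      rw [key0]
      rcases zmod2_cases (α 0) with h | h | h | h <;> rw [h] <;>
        simp (config := { decide := true })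
    · simp only [if_neg hj, hj, false_and, if_false, mul_one]
      exact key1 (α j)
  have hsign : ∏ j, c j = -1 := by
    rw [hc]
    rw [Finset.prod_mul_distrib]
    have e1 : ∏ j, (if α j = (1,1) then (-1:ℝ) else 1) =
        (-1) ^ deltaCount m α := by
      rw [Finset.prod_ite, Finset.prod_const, Finset.prod_const, deltaCount]
      simp
    have e2 : ∏ j : Fin (m+1), (if j = 0 ∧ (α 0 = (0, 1) ∨ α 0 = (1, 0)) then (-1:ℝ) else 1) =
        (-1) ^ (if α 0 = (0, 1) ∨ α 0 = (1, 0) then 1 else 0) := by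
      by_cases h : α 0 = (0, 1) ∨ α 0 = (1, 0)
      · simp only [h, and_true, if_pos]
        rw [Finset.prod_ite_eq' Finset.univ (0 : Fin (m+1)) (fun _ => (-1:ℝ))]
        simp
      · simp [h]
    rw [e1, e2, ← pow_add]
    exact Odd.neg_one_pow hα
  have hmain : (Sfun m α)ᵀ * Sfun m β = -(Sfun m β * Sfun m α) := by
    rw [h1, h2]
    ext v w
    simp only [Matrix.of_apply, Matrix.neg_apply]
    calc ∏ j, ((S2 (α j))ᵀ * S2 (β j)) (v j) (w j)
        = ∏ j, (c j • (S2 (β j) * S2 (α j))) (v j) (w j) := by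
          refine Finset.prod_congr rfl fun j _ => ?_; rw [hfac j]
      _ = ∏ j, (c j * (S2 (β j) * S2 (α j)) (v j) (w j)) := by
          simp [Matrix.smul_apply, smul_eq_mul]
      _ = (∏ j, c j) * ∏ j, (S2 (β j) * S2 (α j)) (v j) (w j) := by
          rw [Finset.prod_mul_distrib]
      _ = -(∏ j, (S2 (β j) * S2 (α j)) (v j) (w j)) := by rw [hsign]; ring
  have hJ : Jmat m = -(Sfun m β) := by rw [Jmat]
  rw [hJ, Matrix.mul_neg, Matrix.neg_mul, hmain, neg_neg, add_neg_cancel]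
end

section
/- With Γ as defined (sequences α ∈ (ℤ₂²)^{m+1} with δ(α) + [a₀ ∈ {(0,1),(1,0)}] odd), the cardinality of Γ equals 2·2^{2m} + 2^m, which is the dimension of the real symplectic Lie algebra sp(2·2^m). -/
open Matrix

/-- The cardinality of `Γ` equals `2·2^{2m} + 2^m = dim sp(2·2^m, ℝ)`. -/
theorem stmt5 (m : ℕ) : (GammaSet m).card = 2 * 2 ^ (2 * m) + 2 ^ m := by
  classical
  set X := (ZMod 2 × ZMod 2) with hX
  set g : Fin (m + 1) → X → ℤ := fun j a =>
    (-1) ^ ((if a = (1, 1) then 1 else 0) +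
      (if j = 0 ∧ (a = (0, 1) ∨ a = (1, 0)) then 1 else 0)) with hg
  have hw : ∀ α : Fin (m + 1) → X, ∏ j, g j (α j)
      = (-1 : ℤ) ^ (deltaCount m α + if α 0 = (0, 1) ∨ α 0 = (1, 0) then 1 else 0) := by
    intro α
    rw [hg]
    simp only []
    rw [Finset.prod_pow_eq_pow_sum]
    congr 1
    rw [Finset.sum_add_distrib]
    congr 1
    · rw [deltaCount, Finset.card_filter]
    · have h : ∀ j : Fin (m + 1),
          (if j = 0 ∧ (α j = (0, 1) ∨ α j = (1, 0)) then (1:ℕ) else 0)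
          = if j = 0 then (if α 0 = (0, 1) ∨ α 0 = (1, 0) then 1 else 0) else 0 := by
        intro j
        by_cases hj : j = 0 <;> simp [hj]
      rw [Finset.sum_congr rfl fun j _ => h j]
      simp
  have hsumj : ∀ j : Fin (m + 1), ∑ a : X, g j a = if j = 0 then -2 else 2 := by
    intro j
    by_cases hj : j = 0
    · subst hj
      have h : ∀ a : X, g 0 a = if a = (0, 0) then 1 else -1 := by
        intro a
        rw [hg]
        fin_cases a <;> simp <;> decide
      rw [Finset.sum_congr rfl fun a _ => h a]
      simp only [if_pos rfl]
      decide
    · have h : ∀ a : X, g j a = if a = (1, 1) then -1 else 1 := by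
        intro a
        rw [hg]
        fin_cases a <;> simp [hj]
      rw [Finset.sum_congr rfl fun a _ => h a]
      rw [if_neg hj]
      decide
  have hS : ∑ α : Fin (m + 1) → X, ∏ j, g j (α j) = -(2 : ℤ) * 2 ^ m := by
    rw [← Fintype.prod_sum (fun (j : Fin (m + 1)) (a : X) => g j a)]
    rw [Finset.prod_congr rfl fun j _ => hsumj j]
    rw [Fin.prod_univ_succ]
    simp [Fin.succ_ne_zero]
  have hS2 : ∑ α : Fin (m + 1) → X, ∏ j, g j (α j)
      = -((GammaSet m).card : ℤ) + ((4 : ℤ) ^ (m + 1) - (GammaSet m).card) := by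
    have hG : (GammaSet m).card = (Finset.univ.filter
        (fun α : Fin (m + 1) → X => Odd (deltaCount m α + if α 0 = (0, 1) ∨ α 0 = (1, 0) then 1 else 0))).card := rfl
    rw [Finset.sum_congr rfl fun α _ => hw α]
    rw [← Finset.sum_filter_add_sum_filter_not Finset.univ
      (fun α => Odd (deltaCount m α + if α 0 = (0, 1) ∨ α 0 = (1, 0) then 1 else 0))]
    have h1 : ∀ α ∈ Finset.univ.filter
        (fun α : Fin (m + 1) → X => Odd (deltaCount m α + if α 0 = (0, 1) ∨ α 0 = (1, 0) then 1 else 0)),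
        (-1 : ℤ) ^ (deltaCount m α + if α 0 = (0, 1) ∨ α 0 = (1, 0) then 1 else 0) = -1 := by
      intro α hα
      rw [Finset.mem_filter] at hα
      exact Odd.neg_one_pow hα.2
    have h2 : ∀ α ∈ Finset.univ.filter
        (fun α : Fin (m + 1) → X => ¬ Odd (deltaCount m α + if α 0 = (0, 1) ∨ α 0 = (1, 0) then 1 else 0)),
        (-1 : ℤ) ^ (deltaCount m α + if α 0 = (0, 1) ∨ α 0 = (1, 0) then 1 else 0) = 1 := by
      intro α hα
      rw [Finset.mem_filter] at hα
      exact Even.neg_one_pow (Nat.not_odd_iff_even.mp hα.2)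
    rw [Finset.sum_congr rfl h1, Finset.sum_congr rfl h2]
    rw [Finset.sum_const, Finset.sum_const]
    have hcard : (Finset.univ.filter
        (fun α : Fin (m + 1) → X => ¬ Odd (deltaCount m α + if α 0 = (0, 1) ∨ α 0 = (1, 0) then 1 else 0))).card
        = 4 ^ (m + 1) - (GammaSet m).card := by
      have := Finset.card_filter_add_card_filter_not (s := (Finset.univ : Finset (Fin (m + 1) → X)))
        (p := fun α => Odd (deltaCount m α + if α 0 = (0, 1) ∨ α 0 = (1, 0) then 1 else 0))
      have hu : (Finset.univ : Finset (Fin (m + 1) → X)).card = 4 ^ (m + 1) := by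
        simp [Finset.card_univ]
      rw [hG, ← hu]
      exact eq_tsub_of_add_eq (by rw [Nat.add_comm]; exact this)
    rw [hcard, ← hG]
    have hle : (GammaSet m).card ≤ 4 ^ (m + 1) := by
      calc (GammaSet m).card ≤ (Finset.univ : Finset (Fin (m + 1) → X)).card :=
            Finset.card_le_card (Finset.filter_subset _ _)
        _ = 4 ^ (m + 1) := by simp [Finset.card_univ]
    simp only [nsmul_eq_mul]
    rw [Nat.cast_sub hle]
    push_cast
    ring
  have key : (2 : ℤ) * (GammaSet m).card = 2 * (2 * 2 ^ (2 * m) + 2 ^ m) := by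
    rw [hS2] at hS
    have h4 : (4 : ℤ) ^ (m + 1) = 4 * ((2 : ℤ) ^ m * 2 ^ m) := by
      rw [show (4:ℤ) = 2 * 2 by norm_num, mul_pow]
      ring
    have h2m : (2 : ℤ) ^ (2 * m) = (2 : ℤ) ^ m * 2 ^ m := by
      rw [two_mul, pow_add]
    rw [h4] at hS
    rw [h2m]
    linarith
  have := mul_left_cancel₀ (two_ne_zero (α := ℤ)) key
  exact_mod_cast this
end
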